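/- arXiv:2404.11704 — 6 statements merged into one kernel-verified Lean document; each statement's English description precedes it below -/
import Mathlib

section
/- Let H be a fixed graph, let G be a minimal obstruction to H-coloring, and let U and W be two non-empty disjoint subsets of V(G). Let J be the graph on V(G)\U whose edges are the pairs uv such that every H-coloring c of G−U satisfies c(u)c(v) ∈ E(H). If there exists a homomorphism φ from G[U] to J[W], then there exists a vertex u ∈ U with N_G(u)\U not contained in N_J(φ(u)). -/
/-!
Suppose every `u ∈ U` had `N_G(u) \ U ⊆ N_J(φ u)`. By minimality `G - U` has an `H`-coloring `c`;
recolor each `u ∈ U` by `c (φ u)`. An edge of `G` inside `U` goes to the `J`-edge `φ u φ v`, and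
an edge from `u ∈ U` to `v ∉ U` to the `J`-edge `φ u v`; every coloring of `G - U` sends `J`-edges
to edges of `H`, so this is an `H`-coloring of `G`, which is impossible.
-/

open SimpleGraph

/-- `G` is a minimal obstruction to `H`-coloring: `G` has no homomorphism to `H`, but every
proper induced subgraph of `G` has one. -/
def MinObstruction {V W : Type*} (G : SimpleGraph V) (H : SimpleGraph W) : Prop :=
  ¬ Nonempty (G →g H) ∧ ∀ s : Set V, s ≠ Set.univ → Nonempty (G.induce s →g H)

/-- `c : V → W` is an `H`-coloring of the graph `G - U` (encoded as a total function: only the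
values outside `U` matter). -/
def ColoringOff {V W : Type*} (G : SimpleGraph V) (H : SimpleGraph W) (U : Set V)
    (c : V → W) : Prop :=
  ∀ ⦃u v : V⦄, G.Adj u v → u ∉ U → v ∉ U → H.Adj (c u) (c v)

/-- The graph `J = hull(G - U, H)`: vertices outside `U` are adjacent iff every `H`-coloring of
`G - U` maps them to adjacent vertices of `H`. -/
def hullOff {V W : Type*} (G : SimpleGraph V) (H : SimpleGraph W) (U : Set V) :
    SimpleGraph V :=
  SimpleGraph.fromRel (fun u v =>
    u ∉ U ∧ v ∉ U ∧ ∀ c : V → W, ColoringOff G H U c → H.Adj (c u) (c v))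

section

variable {V W : Type*} {G : SimpleGraph V} {H : SimpleGraph W} {U : Set V}

lemma ColoringOff.map_hullOff_adj {c : V → W} (hc : ColoringOff G H U c) {x y : V}
    (h : (hullOff G H U).Adj x y) : H.Adj (c x) (c y) := by
  rw [hullOff, fromRel_adj] at h
  rcases h.2 with ⟨-, -, hxy⟩ | ⟨-, -, hyx⟩
  · exact hxy c hc
  · exact (hyx c hc).symm

lemma exists_coloringOff_of_induce_compl [Nonempty W] (g : G.induce Uᶜ →g H) :
    ∃ c : V → W, ColoringOff G H U c := by
  classical
  refine ⟨fun v => if hv : v ∈ U then Classical.arbitrary W else g ⟨v, hv⟩, ?_⟩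
  intro u v huv hu hv
  simp only [dif_neg hu, dif_neg hv]
  exact g.map_adj huv

lemma nonempty_hom_of_hullOff {c : V → W} (hc : ColoringOff G H U c) (φ : V → V)
    (hin : ∀ ⦃u v : V⦄, u ∈ U → v ∈ U → G.Adj u v → (hullOff G H U).Adj (φ u) (φ v))
    (hout : ∀ ⦃u v : V⦄, u ∈ U → v ∉ U → G.Adj u v → (hullOff G H U).Adj (φ u) v) :
    Nonempty (G →g H) := by
  classical
  refine ⟨⟨U.piecewise (c ∘ φ) c, fun {a b} hab => ?_⟩⟩
  by_cases ha : a ∈ U <;> by_cases hb : b ∈ U <;>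
    simp only [Set.piecewise, ha, hb, if_true, if_false, Function.comp_apply]
  · exact hc.map_hullOff_adj (hin ha hb hab)
  · exact hc.map_hullOff_adj (hout ha hb hab)
  · exact (hc.map_hullOff_adj (hout hb ha hab.symm)).symm
  · exact hc hab ha hb

end

theorem stmt3_general {V W' : Type*} (G : SimpleGraph V) (H : SimpleGraph W')
    (hmin : MinObstruction G H) (U Ws : Set V) (hU : U.Nonempty) (hW : Ws.Nonempty)
    (hdisj : Disjoint U Ws) (φ : V → V)
    (hhom : ∀ ⦃u v : V⦄, u ∈ U → v ∈ U → G.Adj u v → (hullOff G H U).Adj (φ u) (φ v)) :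
    ∃ u ∈ U, ¬ ({v | G.Adj u v} \ U ⊆ {v | (hullOff G H U).Adj (φ u) v}) := by
  by_contra! hout
  obtain ⟨g⟩ := hmin.2 Uᶜ (Set.compl_ne_univ.mpr hU)
  obtain ⟨w, hw⟩ := hW
  have : Nonempty W' := ⟨g ⟨w, hdisj.notMem_of_mem_right hw⟩⟩
  obtain ⟨c, hc⟩ := exists_coloringOff_of_induce_compl g
  exact hmin.1 <| nonempty_hom_of_hullOff hc φ hhom fun u v hu hv huv => hout u hu ⟨huv, hv⟩

/-- If `G` is a minimal obstruction to `H`-coloring, `U, W` are nonempty disjoint vertex sets,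
`J = hull(G - U, H)`, and `φ` is a homomorphism from `G[U]` to `J[W]`, then some `u ∈ U`
satisfies `N_G(u) \ U ⊄ N_J(φ(u))`. -/
theorem stmt3 {V W' : Type*} (G : SimpleGraph V) (H : SimpleGraph W')
    (hmin : MinObstruction G H) (U Ws : Set V) (hU : U.Nonempty) (hW : Ws.Nonempty)
    (hdisj : Disjoint U Ws) (φ : V → V) (hmap : Set.MapsTo φ U Ws)
    (hhom : ∀ ⦃u v : V⦄, u ∈ U → v ∈ U → G.Adj u v → (hullOff G H U).Adj (φ u) (φ v)) :
    ∃ u ∈ U, ¬ ({v | G.Adj u v} \ U ⊆ {v | (hullOff G H U).Adj (φ u) v}) :=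
  stmt3_general G H hmin U Ws hU hW hdisj φ hhom
end

section
/- Let F ∈ {S_{2,2,1}, S_{3,1,1}} and let G be a connected graph that is F-free, C_5-free and K_3-free, containing an induced odd cycle C of minimal odd length t ≥ 7 with consecutive vertices c_0,...,c_{t-1}. Then every vertex of G not on C has exactly two neighbors on C, and these are of the form c_{i-1}, c_{i+1} for some i (indices mod t). -/
open SimpleGraph

/-- `G` contains no induced subgraph isomorphic to `F`. -/
def IsFreeOf {V VF : Type*} (G : SimpleGraph V) (F : SimpleGraph VF) : Prop :=
  ∀ s : Set V, ¬ Nonempty (F ≃g G.induce s)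

/-- The subdivided claw `S_{2,2,1}`: legs `0-1-2`, `0-3-4`, `0-5` from the center `0`. -/
def S221 : SimpleGraph (Fin 6) :=
  SimpleGraph.fromEdgeSet {s(0,1), s(1,2), s(0,3), s(3,4), s(0,5)}

/-- The subdivided claw `S_{3,1,1}`: legs `0-1-2-3`, `0-4`, `0-5` from the center `0`. -/
def S311 : SimpleGraph (Fin 6) :=
  SimpleGraph.fromEdgeSet {s(0,1), s(1,2), s(2,3), s(0,4), s(0,5)}

/-!
By minimality of `t`, a vertex `v` off `C` adjacent to `c_j` and `c_k` closes, with the arc of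
odd length between them, an odd cycle of length at most that arc plus two; hence `j - k = ±2`,
and since `t ≥ 7` the neighbours of `v` on `C`, if there are at least two, are exactly
`c_{i-1}, c_{i+1}`. A single neighbour `c_m` is impossible: `v` and the arc `c_{m-2}, …, c_{m+3}`
induce `S_{3,2,1}`. If `v` had no neighbour on `C`, connectivity would give adjacent `x, y` where
`x` has no neighbour on `C` and `y` has the neighbours `c_{i-1}, c_{i+1}`; replacing `c_i` by `y`
gives an induced cycle on which `x` has the single neighbour `y`.
-/

theorem ZMod.natCast_inj_of_lt {n a b : ℕ} (ha : a < n) (hb : b < n) :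
    (a : ZMod n) = b ↔ a = b :=
  ⟨fun h => by simpa [ZMod.val_cast_of_lt ha, ZMod.val_cast_of_lt hb] using congrArg ZMod.val h,
    congrArg _⟩

theorem ZMod.val_sub_add_val_sub {n : ℕ} [NeZero n] {a b : ZMod n} (h : a ≠ b) :
    (a - b).val + (b - a).val = n := by
  rw [← neg_sub b a, ZMod.neg_val, if_neg (sub_ne_zero.mpr h.symm)]
  have := ZMod.val_lt (b - a)
  omega

namespace SimpleGraph

variable {V : Type*} {G : SimpleGraph V}

theorem Walk.IsPath.isCycle_cons_cons {a b v : V} {p : G.Walk a b} (hp : p.IsPath)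
    (hv : v ∉ p.support) (hva : G.Adj v a) (hbv : G.Adj b v) (hab : a ≠ b) :
    (Walk.cons hbv (Walk.cons hva p)).IsCycle := by
  refine Walk.cons_isCycle_iff _ _ |>.mpr ⟨Walk.cons_isPath_iff _ _ |>.mpr ⟨hp, hv⟩, ?_⟩
  rw [Walk.edges_cons, List.mem_cons, Sym2.eq_iff, not_or]
  refine ⟨by rintro (⟨rfl, -⟩ | ⟨rfl, -⟩) <;> simp_all, ?_⟩
  exact fun h => hv (p.snd_mem_support_of_mem_edges h)

theorem isFreeOf_iff_not_isIndContained {W : Type*} {F : SimpleGraph W} :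
    IsFreeOf G F ↔ ¬ F ⊴ G := by
  simp [IsFreeOf, isIndContained_iff_exists_iso_induce]

theorem isIndContained_of_adj_iff {W : Type*} {F : SimpleGraph W} (f : W → V)
    (hf : Function.Injective f) (hadj : ∀ a b, G.Adj (f a) (f b) ↔ F.Adj a b) : F ⊴ G :=
  ⟨⟨⟨f, hf⟩, hadj _ _⟩⟩

section Pendant

variable {q : pathGraph 6 ↪g G} {u : V}

theorem ne_of_adj_iff_eq_two (hu : ∀ k, G.Adj u (q k) ↔ k = 2) (k : Fin 6) : u ≠ q k := by
  rintro rfl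
  simp only [q.map_adj_iff, pathGraph_adj] at hu
  revert k hu
  decide

/-- The path `q` with the pendant vertex `u` is an induced `S_{3,2,1}`, which contains both
`S_{2,2,1}` and `S_{3,1,1}`. -/
theorem isIndContained_of_pendant {F : SimpleGraph (Fin 6)} (hF : F = S221 ∨ F = S311)
    (hu : ∀ k, G.Adj u (q k) ↔ k = 2) : F ⊴ G := by
  have hne := ne_of_adj_iff_eq_two hu
  have hne' : ∀ k, q k ≠ u := fun k => (hne k).symm
  have hu' : ∀ k, G.Adj (q k) u ↔ k = 2 := fun k => G.adj_comm _ _ |>.trans (hu k)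
  rcases hF with rfl | rfl
  · refine isIndContained_of_adj_iff ![q 2, q 1, q 0, q 3, q 4, u] (fun a b hab => ?_)
      fun a b => ?_
    · fin_cases a <;> fin_cases b <;> simp [q.injective.eq_iff, hne, hne'] at hab ⊢
    · fin_cases a <;> fin_cases b <;> simp [hu, hu', pathGraph_adj, S221]
  · refine isIndContained_of_adj_iff ![q 2, q 3, q 4, q 5, q 1, u] (fun a b hab => ?_)
      fun a b => ?_
    · fin_cases a <;> fin_cases b <;> simp [q.injective.eq_iff, hne, hne'] at hab ⊢
    · fin_cases a <;> fin_cases b <;> simp [hu, hu', pathGraph_adj, S311]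

end Pendant

structure IsInducedCycle {t : ℕ} (G : SimpleGraph V) (c : ZMod t → V) : Prop where
  injective : Function.Injective c
  adj_iff : ∀ i j, G.Adj (c i) (c j) ↔ j = i + 1 ∨ i = j + 1

namespace IsInducedCycle

variable {t : ℕ} {c : ZMod t → V}

theorem adj_add_one (hC : G.IsInducedCycle c) (i : ZMod t) : G.Adj (c i) (c (i + 1)) :=
  (hC.adj_iff _ _).mpr (Or.inl rfl)

theorem adj_add_natCast_iff (hC : G.IsInducedCycle c) {n : ℕ} (hn : n < t) (i : ZMod t)
    {a b : ℕ} (ha : a < n) (hb : b < n) : G.Adj (c (i + a)) (c (i + b)) ↔ a + 1 = b ∨ b + 1 = a := by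
  rw [hC.adj_iff, add_assoc, add_assoc, add_right_inj, add_right_inj, ← Nat.cast_add_one,
    ← Nat.cast_add_one, ZMod.natCast_inj_of_lt (by omega) (by omega),
    ZMod.natCast_inj_of_lt (by omega) (by omega), eq_comm (a := b), eq_comm (a := a)]

def arc (hC : G.IsInducedCycle c) {n : ℕ} (hn : n < t) (i : ZMod t) : pathGraph n ↪g G where
  toFun k := c (i + k.val)
  inj' a b h := Fin.ext <| (ZMod.natCast_inj_of_lt (a.2.trans hn) (b.2.trans hn)).mp <|
    add_left_cancel (hC.injective h)
  map_rel_iff' {a b} := by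
    rw [pathGraph_adj]
    exact hC.adj_add_natCast_iff hn i a.2 b.2

theorem arc_apply (hC : G.IsInducedCycle c) {n : ℕ} (hn : n < t) (i : ZMod t) (k : Fin n) :
    hC.arc hn i k = c (i + k.val) := rfl

def arcWalk (hC : G.IsInducedCycle c) (i : ZMod t) : (d : ℕ) → G.Walk (c i) (c (i + d))
  | 0 => Walk.nil.copy rfl (by simp)
  | d + 1 => (Walk.cons (hC.adj_add_one i) (hC.arcWalk (i + 1) d)).copy rfl
      (by push_cast; ring_nf)

theorem length_arcWalk (hC : G.IsInducedCycle c) (i : ZMod t) (d : ℕ) :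
    (hC.arcWalk i d).length = d := by
  induction d generalizing i with
  | zero => simp [arcWalk]
  | succ d ih => simp [arcWalk, ih]

theorem support_arcWalk (hC : G.IsInducedCycle c) (i : ZMod t) (d : ℕ) :
    (hC.arcWalk i d).support = (List.range (d + 1)).map fun k : ℕ => c (i + k) := by
  induction d generalizing i with
  | zero => simp [arcWalk]
  | succ d ih =>
    rw [List.range_succ_eq_map, List.map_cons, List.map_map]
    simp only [arcWalk, Walk.support_copy, Walk.support_cons, ih, Nat.cast_zero, add_zero]
    congr 2
    ext k
    simp only [Function.comp_apply, Nat.cast_succ]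
    ring_nf

theorem isPath_arcWalk (hC : G.IsInducedCycle c) (i : ZMod t) {d : ℕ} (hd : d < t) :
    (hC.arcWalk i d).IsPath := by
  rw [Walk.isPath_def, support_arcWalk]
  refine List.Nodup.map_on (fun a ha b hb h => ?_) List.nodup_range
  rw [List.mem_range] at ha hb
  exact (ZMod.natCast_inj_of_lt (by omega) (by omega)).mp (add_left_cancel (hC.injective h))

/-- `v` closes the arc from `c j` to `c k` into a cycle of length `(k - j).val + 2`. -/
theorem le_val_sub_add_two (hC : G.IsInducedCycle c) [NeZero t]
    (hmin : ∀ (u : V) (w : G.Walk u u), w.IsCycle → Odd w.length → t ≤ w.length)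
    {v : V} (hv : v ∉ Set.range c) {j k : ZMod t} (hj : G.Adj v (c j)) (hk : G.Adj v (c k))
    (hodd : Odd (k - j).val) : t ≤ (k - j).val + 2 := by
  set d := (k - j).val
  have hkd : j + d = k := by simp [d]
  let p := (hC.arcWalk j d).copy rfl (congrArg c hkd)
  have hp : p.IsPath := (Walk.isPath_copy _ _ _).mpr (hC.isPath_arcWalk j (ZMod.val_lt _))
  have hvp : v ∉ p.support := by
    simp only [p, Walk.support_copy, support_arcWalk, List.mem_map]
    rintro ⟨_, _, h⟩
    exact hv ⟨_, h⟩
  have hjk : c j ≠ c k := fun h => by simp [d, hC.injective h] at hodd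
  have hcycle := hp.isCycle_cons_cons hvp hj hk.symm hjk
  have hlen : (Walk.cons hk.symm (Walk.cons hj p)).length = d + 2 := by simp [p, length_arcWalk]
  exact hlen ▸ hmin _ _ hcycle (hlen ▸ hodd.add_even even_two)

theorem sub_eq_two_of_adj (hC : G.IsInducedCycle c) (htodd : Odd t)
    (hmin : ∀ (u : V) (w : G.Walk u u), w.IsCycle → Odd w.length → t ≤ w.length)
    {v : V} (hv : v ∉ Set.range c) {j k : ZMod t} (hj : G.Adj v (c j)) (hk : G.Adj v (c k))
    (hjk : j ≠ k) : k - j = 2 ∨ j - k = 2 := by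
  have : NeZero t := ⟨htodd.pos.ne'⟩
  have key : ∀ {j k : ZMod t}, G.Adj v (c j) → G.Adj v (c k) → j ≠ k → Odd (k - j).val →
      j - k = 2 := fun {j k} hj hk hjk hodd => by
    have hle := hC.le_val_sub_add_two hmin hv hj hk hodd
    have hsum := ZMod.val_sub_add_val_sub hjk.symm
    have hne := (ZMod.val_ne_zero _).mpr (sub_ne_zero.mpr hjk)
    rw [Nat.odd_iff] at hodd htodd
    have h2 : (j - k).val = 2 := by omega
    rw [← ZMod.natCast_zmod_val (j - k), h2, Nat.cast_ofNat]
  rcases Nat.even_or_odd (k - j).val with heven | hodd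
  · refine .inl (key hk hj hjk.symm ?_)
    have hsum := ZMod.val_sub_add_val_sub hjk.symm
    rw [Nat.even_iff] at heven
    rw [Nat.odd_iff] at htodd ⊢
    omega
  · exact .inr (key hj hk hjk hodd)

theorem adj_iff_of_adj_sub_one_of_adj_add_one (hC : G.IsInducedCycle c) (ht : 7 ≤ t)
    (htodd : Odd t) (hmin : ∀ (u : V) (w : G.Walk u u), w.IsCycle → Odd w.length → t ≤ w.length)
    {v : V} (hv : v ∉ Set.range c) {i : ZMod t} (h₁ : G.Adj v (c (i - 1)))
    (h₂ : G.Adj v (c (i + 1))) (j : ZMod t) : G.Adj v (c j) ↔ j = i - 1 ∨ j = i + 1 := by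
  refine ⟨fun hj => ?_, by rintro (rfl | rfl) <;> assumption⟩
  by_contra! hne
  have h6 : ((6 : ℕ) : ZMod t) ≠ ((0 : ℕ) : ZMod t) := by
    rw [Ne, ZMod.natCast_inj_of_lt] <;> omega
  rcases hC.sub_eq_two_of_adj htodd hmin hv h₁ hj hne.1.symm with h | h
  · exact hne.2 (by linear_combination h)
  rcases hC.sub_eq_two_of_adj htodd hmin hv h₂ hj hne.2.symm with h' | h'
  · exact h6 (by push_cast; linear_combination -h - h')
  · exact hne.1 (by linear_combination -h')

theorem not_forall_adj_iff_eq (hC : G.IsInducedCycle c) (ht : 7 ≤ t) {F : SimpleGraph (Fin 6)}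
    (hF : F = S221 ∨ F = S311) (hFfree : IsFreeOf G F) (v : V) (m : ZMod t) :
    ¬ ∀ j, G.Adj v (c j) ↔ j = m := by
  intro hv
  refine isFreeOf_iff_not_isIndContained.mp hFfree <|
    isIndContained_of_pendant (q := hC.arc (n := 6) ht (m - 2)) (u := v) hF fun k => ?_
  rw [arc_apply, hv, sub_add_eq_add_sub, sub_eq_iff_eq_add, add_right_inj,
    ← (Nat.cast_ofNat : ((2 : ℕ) : ZMod t) = 2), ZMod.natCast_inj_of_lt (by omega) (by omega),
    Fin.ext_iff]
  rfl

theorem exists_adj_iff_of_adj (hC : G.IsInducedCycle c) (ht : 7 ≤ t) (htodd : Odd t)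
    (hmin : ∀ (u : V) (w : G.Walk u u), w.IsCycle → Odd w.length → t ≤ w.length)
    {F : SimpleGraph (Fin 6)} (hF : F = S221 ∨ F = S311) (hFfree : IsFreeOf G F)
    {v : V} (hv : v ∉ Set.range c) {m : ZMod t} (hm : G.Adj v (c m)) :
    ∃ i, ∀ j, G.Adj v (c j) ↔ j = i - 1 ∨ j = i + 1 := by
  obtain ⟨n, hn, hnm⟩ : ∃ n, G.Adj v (c n) ∧ n ≠ m := by
    by_contra! h
    exact hC.not_forall_adj_iff_eq ht hF hFfree v m fun j => ⟨h j, by rintro rfl; exact hm⟩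
  rcases hC.sub_eq_two_of_adj htodd hmin hv hm hn hnm.symm with h | h
  · refine ⟨m + 1, hC.adj_iff_of_adj_sub_one_of_adj_add_one ht htodd hmin hv ?_ ?_⟩
    · rwa [add_sub_cancel_right]
    · rwa [show m + 1 + 1 = n by linear_combination -h]
  · refine ⟨n + 1, hC.adj_iff_of_adj_sub_one_of_adj_add_one ht htodd hmin hv ?_ ?_⟩
    · rwa [add_sub_cancel_right]
    · rwa [show n + 1 + 1 = m by linear_combination -h]

theorem update (hC : G.IsInducedCycle c) {y : V} (hy : y ∉ Set.range c) {i : ZMod t}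
    (hyc : ∀ j, G.Adj y (c j) ↔ j = i - 1 ∨ j = i + 1) :
    G.IsInducedCycle (Function.update c i y) := by
  have hi : i ≠ i + 1 := fun h => by simpa [← h] using hC.adj_iff i i
  refine ⟨fun j k hjk => ?_, fun j k => ?_⟩
  · by_cases hj : j = i <;> by_cases hk : k = i <;>
      simp_all [Function.update_of_ne, hC.injective.eq_iff]
  · by_cases hj : j = i <;> by_cases hk : k = i
    · simp [hj, hk, hi]
    · simp [hj, Function.update_of_ne hk, hyc, eq_sub_iff_add_eq, eq_comm, or_comm]
    · simp [hk, Function.update_of_ne hj, G.adj_comm, hyc, eq_sub_iff_add_eq, eq_comm]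
    · simp [Function.update_of_ne hj, Function.update_of_ne hk, hC.adj_iff]

theorem forall_not_adj_of_adj (hC : G.IsInducedCycle c) (ht : 7 ≤ t) (htodd : Odd t)
    (hmin : ∀ (u : V) (w : G.Walk u u), w.IsCycle → Odd w.length → t ≤ w.length)
    {F : SimpleGraph (Fin 6)} (hF : F = S221 ∨ F = S311) (hFfree : IsFreeOf G F)
    {x y : V} (hx : ∀ j, ¬ G.Adj x (c j)) (hxy : G.Adj x y) (j : ZMod t) : ¬ G.Adj y (c j) := by
  intro hyj
  have hy : y ∉ Set.range c := by
    rintro ⟨k, rfl⟩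
    exact hx k hxy
  obtain ⟨i, hi⟩ := hC.exists_adj_iff_of_adj ht htodd hmin hF hFfree hy hyj
  refine (hC.update hy hi).not_forall_adj_iff_eq ht hF hFfree x i fun k => ?_
  rcases eq_or_ne k i with rfl | hk
  · simpa using hxy
  · simpa [Function.update_of_ne hk, hk] using hx k

end IsInducedCycle

end SimpleGraph

theorem stmt8_general {V : Type*} (G : SimpleGraph V) (F : SimpleGraph (Fin 6))
    (hF : F = S221 ∨ F = S311)
    (hconn : G.Connected) (hFfree : IsFreeOf G F)
    (t : ℕ) (ht7 : 7 ≤ t) (htodd : Odd t)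
    (c : ZMod t → V) (hinj : Function.Injective c)
    (hcyc : ∀ i j : ZMod t, G.Adj (c i) (c j) ↔ (j = i + 1 ∨ i = j + 1))
    (hmin : ∀ (u : V) (w : G.Walk u u), w.IsCycle → Odd w.length → t ≤ w.length) :
    ∀ v : V, v ∉ Set.range c →
      ∃ i : ZMod t, ∀ j : ZMod t, G.Adj v (c j) ↔ (j = i - 1 ∨ j = i + 1) := by
  intro v hv
  have hC : G.IsInducedCycle c := ⟨hinj, hcyc⟩
  by_cases hN : ∃ m, G.Adj v (c m)
  · obtain ⟨m, hm⟩ := hN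
    exact hC.exists_adj_iff_of_adj ht7 htodd hmin hF hFfree hv hm
  · push Not at hN
    obtain ⟨w⟩ := hconn.preconnected v (c 0)
    obtain ⟨d, -, hx, hy⟩ := w.exists_boundary_dart {x | ∀ j, ¬ G.Adj x (c j)} hN
      fun h => h 1 (by simpa using hC.adj_add_one 0)
    exact (hy (hC.forall_not_adj_of_adj ht7 htodd hmin hF hFfree hx d.adj)).elim

/-- Let `F ∈ {S_{2,2,1}, S_{3,1,1}}` and let `G` be a connected `{F, C₅, K₃}`-free graph with
an induced odd cycle `c` of minimal odd length `t ≥ 7`. Then every vertex not on the cycle has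
exactly two neighbors on it, of the form `c_{i-1}`, `c_{i+1}` for some `i`. -/
theorem stmt8 {V : Type*} (G : SimpleGraph V) (F : SimpleGraph (Fin 6))
    (hF : F = S221 ∨ F = S311)
    (hconn : G.Connected) (hFfree : IsFreeOf G F)
    (hC5free : IsFreeOf G (cycleGraph 5)) (hK3 : G.CliqueFree 3)
    (t : ℕ) (ht7 : 7 ≤ t) (htodd : Odd t)
    (c : ZMod t → V) (hinj : Function.Injective c)
    (hcyc : ∀ i j : ZMod t, G.Adj (c i) (c j) ↔ (j = i + 1 ∨ i = j + 1))
    (hmin : ∀ (u : V) (w : G.Walk u u), w.IsCycle → Odd w.length → t ≤ w.length) :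
    ∀ v : V, v ∉ Set.range c →
      ∃ i : ZMod t, ∀ j : ZMod t, G.Adj v (c j) ↔ (j = i - 1 ∨ j = i + 1) :=
  stmt8_general G F hF hconn hFfree t ht7 htodd c hinj hcyc hmin
end

section
/- Let h be a homomorphism from G_{q,p} to a graph H whose odd girth is q and which contains no C_4 subgraph, where q ≥ 3 is odd. Then for every j with q ≤ j ≤ qp−3, h(j) = h(j−q). -/
open SimpleGraph

/-- The graph `G_{q,p}` on `ZMod (q*p - 2)`, where `i` is adjacent to `i ± 1` and to
`i + q*k - 1` (and symmetrically) for `k = 1, ..., p-1`. -/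
def Gqp (q p : ℕ) : SimpleGraph (ZMod (q * p - 2)) :=
  SimpleGraph.fromRel (fun i j =>
    j = i + 1 ∨ ∃ k : ℕ, 1 ≤ k ∧ k ≤ p - 1 ∧ j = i + (↑(q * k) : ZMod (q * p - 2)) - 1)

/-- The odd girth of a graph: the least length of an odd cycle (`⊤` if none exists). -/
noncomputable def oddGirth {V : Type*} (G : SimpleGraph V) : ℕ∞ :=
  sInf {n : ℕ∞ | ∃ m : ℕ, n = m ∧ Odd m ∧ ∃ (u : V) (w : G.Walk u u), w.IsCycle ∧ w.length = m}

/-- `H` contains no 4-cycle as a (not necessarily induced) subgraph. -/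
def NoC4Subgraph {W : Type*} (H : SimpleGraph W) : Prop :=
  ¬ ∃ a b c d : W, a ≠ c ∧ b ≠ d ∧ H.Adj a b ∧ H.Adj b c ∧ H.Adj c d ∧ H.Adj d a

/-! Every `q` consecutive vertices of `G_{q,p}` span a `q`-cycle `a, a + 1, …, a + q - 1`
closed by the chord `a ~ a + q - 1`, and shifting it by one gives the 4-cycle
`a, a + 1, a + q, a + q - 1` of `G_{q,p}`. Its image under `h` cannot be a 4-cycle of `H`, so two
opposite corners coincide. The corners `h (a + 1)` and `h (a + q - 1)` cannot: they are joined by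
the image of a walk of odd length `q - 2`, which would be an odd closed walk shorter than the odd
girth. Hence `h (a + q) = h a`. -/

namespace SimpleGraph

variable {V : Type*} {G : SimpleGraph V}

theorem Walk.exists_isCycle_odd_length_le {u : V} (w : G.Walk u u) (hw : Odd w.length) :
    ∃ (v : V) (c : G.Walk v v), c.IsCycle ∧ Odd c.length ∧ c.length ≤ w.length := by
  induction hn : w.length using Nat.strong_induction_on generalizing u with
  | _ n ih =>
  subst hn
  cases w with
  | nil => simp at hw
  | cons hadj r =>
    by_cases hr : r.IsPath
    · have hr0 : r.length ≠ 0 := fun h0 ↦ G.loopless.irrefl _ (eq_of_length_eq_zero h0 ▸ hadj)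
      refine ⟨u, _, isCycle_iff_isPath_tail_and_le_length.mpr ⟨by simpa using hr, ?_⟩, hw, le_rfl⟩
      rw [length_cons] at hw ⊢
      rcases hw with ⟨k, hk⟩
      omega
    · obtain ⟨x, c, ⟨p₁, p₂, rfl⟩, hc⟩ : ∃ (x : V) (c : G.Walk x x), c.IsSubwalk r ∧ ¬ c.Nil := by
        simpa [isPath_iff_isSubwalk_imp_nil] using hr
      -- cutting the closed subwalk `c` out of `w` leaves a shorter closed walk; one of them is odd
      have hc0 : c.length ≠ 0 := by rwa [Ne, length_eq_zero_iff]
      have hlen : (p₁.append p₂).length + 1 + c.length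
          = (cons hadj ((p₁.append c).append p₂)).length := by
        simp only [length_cons, length_append]; ring
      rcases Nat.even_or_odd c.length with hce | hco
      · obtain ⟨v, c', hc', hodd, hle⟩ := ih _ (by rw [length_cons]; omega)
          (cons hadj (p₁.append p₂)) (by rw [← hlen] at hw; exact (Nat.odd_add.mp hw).mpr hce) rfl
        exact ⟨v, c', hc', hodd, by rw [length_cons] at hle; omega⟩
      · obtain ⟨v, c', hc', hodd, hle⟩ := ih _ (by omega) c hco rfl
        exact ⟨v, c', hc', hodd, by omega⟩

theorem exists_walk_add_natCast_length {M : Type*} [AddMonoidWithOne M] {G : SimpleGraph M}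
    (hG : ∀ a, G.Adj a (a + 1)) (a : M) (n : ℕ) :
    ∃ w : G.Walk a (a + n), w.length = n := by
  induction n with
  | zero => exact ⟨Walk.nil.copy rfl (by simp), by simp⟩
  | succ n ih =>
    obtain ⟨w, hw⟩ := ih
    exact ⟨(w.concat (hG _)).copy rfl (by push_cast; rw [add_assoc]), by simp [hw]⟩

end SimpleGraph

theorem oddGirth_le_length {W : Type*} {H : SimpleGraph W} {u : W} (w : H.Walk u u)
    (hw : Odd w.length) : oddGirth H ≤ w.length := by
  obtain ⟨v, c, hc, hodd, hle⟩ := w.exists_isCycle_odd_length_le hw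
  calc oddGirth H ≤ c.length := sInf_le ⟨c.length, rfl, hodd, v, c, hc, rfl⟩
    _ ≤ w.length := by exact_mod_cast hle

section Gqp

variable {q p : ℕ}

theorem Gqp_adj_add_one (hqp : q * p ≠ 3) (a : ZMod (q * p - 2)) :
    (Gqp q p).Adj a (a + 1) := by
  refine (fromRel_adj _ _ _).mpr ⟨fun h ↦ ?_, .inl (.inl rfl)⟩
  have h1 : ((1 : ℕ) : ZMod (q * p - 2)) = 0 := by simpa using h
  rw [ZMod.natCast_eq_zero_iff, Nat.dvd_one] at h1
  omega

theorem Gqp_adj_add_sub_one (hq : 2 ≤ q) (hp : 2 ≤ p) (a : ZMod (q * p - 2)) :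
    (Gqp q p).Adj a (a + q - 1) := by
  refine (fromRel_adj _ _ _).mpr ⟨fun h ↦ ?_, .inl (.inr ⟨1, le_rfl, by omega, by simp⟩)⟩
  have h1 : ((q - 1 : ℕ) : ZMod (q * p - 2)) = 0 := by
    rw [Nat.cast_sub (by omega), Nat.cast_one]
    linear_combination -h
  rw [ZMod.natCast_eq_zero_iff] at h1
  have : q * 2 ≤ q * p := Nat.mul_le_mul_left q hp
  have := Nat.eq_zero_of_dvd_of_lt h1 (by omega)
  omega

theorem Gqp_hom_periodic {W : Type*} {H : SimpleGraph W} (hq : Odd q) (hq3 : 3 ≤ q) (hp : 2 ≤ p)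
    (hgirth : (q : ℕ∞) ≤ oddGirth H) (hC4 : NoC4Subgraph H) (h : Gqp q p →g H) :
    Function.Periodic h (q : ZMod (q * p - 2)) := by
  intro a
  have hqp : q * p ≠ 3 := by nlinarith
  have hsucc := Gqp_adj_add_one hqp
  have hjump := Gqp_adj_add_sub_one (q := q) (by omega) hp
  have hne : h (a + 1) ≠ h (a + q - 1) := by
    intro heq
    obtain ⟨w, hw⟩ := exists_walk_add_natCast_length hsucc (a + 1) (q - 2)
    have hend : h (a + 1 + (q - 2 : ℕ)) = h (a + 1) := by
      rw [heq, Nat.cast_sub (by omega)]; push_cast; ring_nf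
    have hshort := oddGirth_le_length ((w.map h).copy rfl hend)
      (by simpa [hw] using Nat.Odd.sub_even (by omega) hq even_two)
    rw [Walk.length_copy, Walk.length_map, hw] at hshort
    have : q ≤ q - 2 := by exact_mod_cast hgirth.trans hshort
    omega
  by_contra hper
  refine hC4 ⟨h a, h (a + 1), h (a + q), h (a + q - 1), Ne.symm hper, hne, h.map_adj (hsucc a),
    ?_, ?_, (h.map_adj (hjump a)).symm⟩
  · simpa [add_sub_cancel_right, add_right_comm] using h.map_adj (hjump (a + 1))
  · simpa using (h.map_adj (hsucc (a + q - 1))).symm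

end Gqp

theorem stmt13_general {W : Type*} (q p : ℕ) (hq : Odd q) (hq3 : 3 ≤ q)
    (H : SimpleGraph W) (hgirth : oddGirth H = (q : ℕ∞)) (hC4 : NoC4Subgraph H)
    (h : Gqp q p →g H) :
    ∀ j : ℕ, q ≤ j → j ≤ q * p - 3 →
      h ((j : ℕ) : ZMod (q * p - 2)) = h (((j - q : ℕ) : ℕ) : ZMod (q * p - 2)) := by
  intro j hjq hjle
  have hp : 2 ≤ p := by
    by_contra! hp
    have : q * p ≤ q * 1 := Nat.mul_le_mul_left q (by omega)
    omega
  have hj : ((j : ℕ) : ZMod (q * p - 2)) = ((j - q : ℕ) : ZMod (q * p - 2)) + q := by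
    rw [← Nat.cast_add, Nat.sub_add_cancel hjq]
  rw [hj]
  exact Gqp_hom_periodic hq hq3 hp hgirth.ge hC4 h _

/-- If `h` is a homomorphism from `G_{q,p}` to a graph `H` of odd girth `q` without `C₄`
subgraphs (`q ≥ 3` odd), then `h(j) = h(j - q)` for every `q ≤ j ≤ qp - 3`. -/
theorem stmt13 {W : Type*} (q p : ℕ) (hq : Odd q) (hq3 : 3 ≤ q) (hp : 1 ≤ p)
    (H : SimpleGraph W) (hgirth : oddGirth H = (q : ℕ∞)) (hC4 : NoC4Subgraph H)
    (h : Gqp q p →g H) :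
    ∀ j : ℕ, q ≤ j → j ≤ q * p - 3 →
      h ((j : ℕ) : ZMod (q * p - 2)) = h (((j - q : ℕ) : ℕ) : ZMod (q * p - 2)) :=
  stmt13_general q p hq hq3 H hgirth hC4 h
end

section
/- Let q ≥ 3 be odd. For every p ≥ 1 the graph G_{q,p} does not contain an induced matching of size q, i.e., G_{q,p} is qK_2-free. -/
/-!
Translate an induced copy of `qK₂` in `G_{q,p}` off the vertex `0` and read its vertices as
integers in `[1, qp - 3]`. Every edge then joins some `a` to `a + 1`, or is a chord whose larger
end is one less than its smaller end mod `q`; either way its ends have residues `c` and `c + 1`.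
Conversely, two vertices `x < y` with `y ≡ x - 1 (mod q)` are always joined by a chord, so no
such pair lies on two different edges of the matching. This forces the `q` edges to have
distinct residues `c`, hence every residue occurs on two different edges; but then the smallest
vertex of the matching, of residue `r`, has a smaller vertex of residue `r - 1` on another edge.
-/

open SimpleGraph

/-- `nK₂`: the disjoint union of `n` edges (a perfect matching on `2n` vertices). -/
def nK2 (n : ℕ) : SimpleGraph (Fin n × Fin 2) where
  Adj a b := a.1 = b.1 ∧ a.2 ≠ b.2
  symm := ⟨by intro a b ⟨h1, h2⟩; exact ⟨h1.symm, h2.symm⟩⟩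
  loopless := ⟨by intro a ⟨h1, h2⟩; exact h2 rfl⟩

/-- `b ≡ a + 1 (mod q)` and `b` is `a + 1` or lies below `a`: the shape of an edge of `G_{q,p}`
between representatives in `[1, qp - 3]`, oriented from its end of lower residue. -/
def ModLink (q a b : ℕ) : Prop :=
  (b : ZMod q) = a + 1 ∧ (b = a + 1 ∨ b < a)

theorem ModLink.eq_of_lt_of_lt {q a₁ b₁ a₂ b₂ : ℕ} (h₁ : ModLink q a₁ b₁) (h₂ : ModLink q a₂ b₂)
    (h₁₂ : a₂ < b₁) (h₂₁ : a₁ < b₂) : a₁ = a₂ := by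
  have := h₁.2
  have := h₂.2
  omega

theorem exists_crossing_of_modLink {q : ℕ} (hq : 2 ≤ q) (w : Fin q × Fin 2 → ℕ)
    (hw : Function.Injective w)
    (hlink : ∀ t, ModLink q (w (t, 0)) (w (t, 1)) ∨ ModLink q (w (t, 1)) (w (t, 0))) :
    ∃ x y, x.1 ≠ y.1 ∧ (w x : ZMod q) = w y + 1 ∧ w x < w y := by
  have : Fact (1 < q) := ⟨hq⟩
  by_contra! hsep
  replace hsep : ∀ x y, x.1 ≠ y.1 → (w x : ZMod q) = w y + 1 → w y < w x := fun x y hxy h =>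
    (hsep x y hxy h).lt_of_ne (hw.ne fun h => hxy (congrArg Prod.fst h).symm)
  have horient : ∀ t, ∃ lo hi : Fin q × Fin 2, lo.1 = t ∧ hi.1 = t ∧ ModLink q (w lo) (w hi) :=
    fun t => (hlink t).elim (fun h => ⟨_, _, rfl, rfl, h⟩) (fun h => ⟨_, _, rfl, rfl, h⟩)
  choose lo hi hlo hhi hlohi using horient
  have hres_inj : Function.Injective fun t => (w (lo t) : ZMod q) := by
    intro t₁ t₂ (h : (w (lo t₁) : ZMod q) = w (lo t₂))
    by_contra hne
    have h₁₂ := hsep (hi t₁) (lo t₂) (by rwa [hhi, hlo]) (by rw [(hlohi t₁).1, h])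
    have h₂₁ := hsep (hi t₂) (lo t₁) (by rw [hhi, hlo]; exact Ne.symm hne) (by rw [(hlohi t₂).1, h])
    have := (hlohi t₁).eq_of_lt_of_lt (hlohi t₂) h₁₂ h₂₁
    exact hne (by rw [← hlo t₁, hw this, hlo])
  have hres_surj :=
    ((Fintype.bijective_iff_injective_and_card _).2 ⟨hres_inj, by simp⟩).surjective
  have hcover : ∀ (c : ZMod q) (t : Fin q), ∃ y, y.1 ≠ t ∧ (w y : ZMod q) = c := by
    intro c t
    obtain ⟨t₁, h₁ : (w (lo t₁) : ZMod q) = c⟩ := hres_surj c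
    obtain ⟨t₂, h₂ : (w (lo t₂) : ZMod q) = c - 1⟩ := hres_surj (c - 1)
    have ht₁₂ : t₁ ≠ t₂ := by
      rintro rfl
      exact one_ne_zero (sub_eq_self.1 (h₂.symm.trans h₁))
    by_cases ht : t₁ = t
    · exact ⟨hi t₂, by rwa [hhi, ← ht, ne_comm], by rw [(hlohi t₂).1, h₂, sub_add_cancel]⟩
    · exact ⟨lo t₁, by rwa [hlo], h₁⟩
  obtain ⟨x, -, hx⟩ := Finset.exists_min_image Finset.univ w
    ⟨(⟨0, by omega⟩, 0), Finset.mem_univ _⟩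
  obtain ⟨y, hy, hyx⟩ := hcover ((w x : ZMod q) - 1) x.1
  exact (hsep x y (Ne.symm hy) (by rw [hyx, sub_add_cancel])).not_ge (hx y (Finset.mem_univ _))

theorem exists_forall_add_ne_zero {ι G : Type*} [Fintype ι] [AddGroup G] [Fintype G]
    (W : ι → G) (h : Fintype.card ι < Fintype.card G) : ∃ σ, ∀ x, W x + σ ≠ 0 := by
  classical
  obtain ⟨σ, -, hσ⟩ := Finset.exists_mem_notMem_of_card_lt_card
    (s := Finset.univ.image fun x => -W x) (t := Finset.univ)
    (Finset.card_image_le.trans_lt (by simpa using h))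
  exact ⟨σ, fun x hx =>
    hσ (Finset.mem_image.2 ⟨x, Finset.mem_univ _, neg_eq_of_add_eq_zero_right hx⟩)⟩

theorem val_add_natCast_eq_or {n : ℕ} [NeZero n] (x : ZMod n) {d : ℕ} (hd : d < n) :
    (x + d).val = x.val + d ∨ (x + d).val + n = x.val + d := by
  have hdval : (d : ZMod n).val = d := ZMod.val_cast_of_lt hd
  rcases lt_or_ge (x.val + d) n with h | h
  · left
    rw [ZMod.val_add_of_lt (by rwa [hdval]), hdval]
  · right
    rw [ZMod.val_add_of_le (by rwa [hdval]), hdval]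
    omega

section Gqp

variable {q p : ℕ}

theorem Gqp_adj_add_right (a b σ : ZMod (q * p - 2)) :
    (Gqp q p).Adj (a + σ) (b + σ) ↔ (Gqp q p).Adj a b := by
  have key : ∀ i j c : ZMod (q * p - 2), j + σ = i + σ + c ↔ j = i + c := fun i j c => by
    rw [add_right_comm, add_left_inj]
  simp only [Gqp, SimpleGraph.fromRel_adj, ne_eq, add_left_inj, add_sub_assoc, key]

theorem modLink_of_Gqp_rel [NeZero (q * p - 2)] (hq : 2 ≤ q) {x y : ZMod (q * p - 2)}
    (hy : y ≠ 0)
    (h : y = x + 1 ∨ ∃ k : ℕ, 1 ≤ k ∧ k ≤ p - 1 ∧ y = x + (↑(q * k) : ZMod (q * p - 2)) - 1) :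
    ModLink q x.val y.val ∨ ModLink q y.val x.val := by
  have hx := ZMod.val_lt x
  rcases h with rfl | ⟨k, hk1, hkp, rfl⟩
  · have hn : 1 < q * p - 2 := by
      have := ZMod.val_lt (x + 1)
      have := (ZMod.val_ne_zero _).2 hy
      omega
    rcases val_add_natCast_eq_or x hn with h | h <;> rw [Nat.cast_one] at h
    · exact Or.inl ⟨by rw [h]; push_cast; ring, Or.inl h⟩
    · exact absurd ((ZMod.val_eq_zero _).1 (by omega)) hy
  · have hqk : q * k + q ≤ q * p := by
      simpa [mul_add_one] using Nat.mul_le_mul_left q (show k + 1 ≤ p by omega)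
    have hqk1 : 2 ≤ q * k := by nlinarith
    have hd : q * k - 1 < q * p - 2 := by omega
    rw [add_sub_assoc, ← Nat.cast_one, ← Nat.cast_sub (by omega)]
    rcases val_add_natCast_eq_or x hd with h | h <;>
      set y := x + ((q * k - 1 : ℕ) : ZMod (q * p - 2))
    · refine Or.inr ⟨?_, Or.inr (by omega)⟩
      have hcast := congrArg (Nat.cast : ℕ → ZMod q) (show x.val + q * k = y.val + 1 by omega)
      push_cast [ZMod.natCast_self] at hcast
      linear_combination hcast
    · refine Or.inl ⟨?_, Or.inr (by omega)⟩
      have hcast := congrArg (Nat.cast : ℕ → ZMod q)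
        (show y.val + q * p + 1 = x.val + q * k + 2 by omega)
      push_cast [ZMod.natCast_self] at hcast
      linear_combination hcast

theorem modLink_of_Gqp_adj [NeZero (q * p - 2)] (hq : 2 ≤ q) {a b : ZMod (q * p - 2)}
    (ha : a ≠ 0) (hb : b ≠ 0) (h : (Gqp q p).Adj a b) :
    ModLink q a.val b.val ∨ ModLink q b.val a.val := by
  obtain ⟨-, h | h⟩ := SimpleGraph.fromRel_adj _ a b |>.1 h
  · exact modLink_of_Gqp_rel hq hb h
  · exact (modLink_of_Gqp_rel hq ha h).symm

theorem Gqp_adj_of_val_lt [NeZero (q * p - 2)] {a b : ZMod (q * p - 2)} (hlt : a.val < b.val)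
    (hres : (a.val : ZMod q) = b.val + 1) : (Gqp q p).Adj a b := by
  obtain ⟨m, hm⟩ : q ∣ b.val - a.val + 1 := (ZMod.natCast_eq_zero_iff _ _).1 (by
    push_cast [Nat.cast_sub hlt.le]
    rw [hres]
    ring)
  have hb := ZMod.val_lt b
  have hm1 : 1 ≤ m := Nat.pos_of_ne_zero (by rintro rfl; omega)
  have hmp : m < p := Nat.lt_of_mul_lt_mul_left (a := q) (by omega)
  have hba : b = a + (↑(q * m) : ZMod (q * p - 2)) - 1 := by
    rw [← hm]
    push_cast [Nat.cast_sub hlt.le, ZMod.natCast_zmod_val]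
    ring
  exact (SimpleGraph.fromRel_adj _ a b).2
    ⟨fun h => hlt.ne (congrArg ZMod.val h), Or.inl (Or.inr ⟨m, hm1, by omega, hba⟩)⟩

theorem Gqp_false_of_nonzero_induced_matching [NeZero (q * p - 2)] (hq : 2 ≤ q)
    (W : Fin q × Fin 2 → ZMod (q * p - 2)) (hW : Function.Injective W) (hW0 : ∀ x, W x ≠ 0)
    (hadj : ∀ x y, (Gqp q p).Adj (W x) (W y) ↔ (nK2 q).Adj x y) : False := by
  obtain ⟨x, y, hxy, hres, hlt⟩ := exists_crossing_of_modLink hq (fun x => (W x).val)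
    (ZMod.val_injective _ |>.comp hW)
    (fun t => modLink_of_Gqp_adj hq (hW0 _) (hW0 _) ((hadj _ _).2 ⟨rfl, zero_ne_one⟩))
  exact hxy ((hadj x y).1 (Gqp_adj_of_val_lt hlt hres)).1

end Gqp

theorem stmt15_general (q : ℕ) (hq3 : 3 ≤ q) :
    ∀ p : ℕ, 1 ≤ p → IsFreeOf (Gqp q p) (nK2 q) := by
  intro p hp s ⟨e⟩
  have hqp : q ≤ q * p := Nat.le_mul_of_pos_right q hp
  have : NeZero (q * p - 2) := ⟨by omega⟩
  let W : Fin q × Fin 2 → ZMod (q * p - 2) := fun x => e x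
  have hW : Function.Injective W := Subtype.val_injective.comp e.injective
  have hcard : q * 2 < q * p - 2 := by
    have h2q : q * 2 ≤ q * p - 2 := by simpa using Fintype.card_le_of_injective W hW
    have hp3 : 3 ≤ p := by
      by_contra! hp2
      have := Nat.mul_le_mul_left q (show p ≤ 2 by omega)
      omega
    have := Nat.mul_le_mul_left q hp3
    omega
  obtain ⟨σ, hσ⟩ := exists_forall_add_ne_zero W (by simpa using hcard)
  exact Gqp_false_of_nonzero_induced_matching (by omega) (fun x => W x + σ)
    ((add_left_injective σ).comp hW) hσ
    (fun x y => (Gqp_adj_add_right _ _ σ).trans e.map_adj_iff)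

/-- For odd `q ≥ 3` and every `p ≥ 1`, the graph `G_{q,p}` contains no induced matching of
size `q`, i.e. it is `qK₂`-free. -/
theorem stmt15 (q : ℕ) (hq : Odd q) (hq3 : 3 ≤ q) :
    ∀ p : ℕ, 1 ≤ p → IsFreeOf (Gqp q p) (nK2 q) :=
  stmt15_general q hq3
end

section
/- Let q ≥ 5 be odd and p ≥ 1. The graph G_{q,p} contains no induced subgraph isomorphic to S_{2,2,2}, the spider obtained from three paths P_3 by identifying one endvertex of each (equivalently, the claw with each edge subdivided once). -/
open SimpleGraph

/-- The subdivided claw (spider) `S_{a,b,c}`: three paths with `a`, `b`, `c` edges glued at a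
common endvertex `none`. -/
def spider (a b c : ℕ) : SimpleGraph (Option (Fin a ⊕ Fin b ⊕ Fin c)) :=
  SimpleGraph.fromRel (fun u v =>
    match u, v with
    | none, some (Sum.inl i) => i.val = 0
    | none, some (Sum.inr (Sum.inl i)) => i.val = 0
    | none, some (Sum.inr (Sum.inr i)) => i.val = 0
    | some (Sum.inl i), some (Sum.inl j) => j.val = i.val + 1
    | some (Sum.inr (Sum.inl i)), some (Sum.inr (Sum.inl j)) => j.val = i.val + 1
    | some (Sum.inr (Sum.inr i)), some (Sum.inr (Sum.inr j)) => j.val = i.val + 1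
    | _, _ => False)

/-! Since `q * p ≡ 2`, the graph `G_{q,p}` is the Cayley graph of `ℤ/(qp - 2)` whose connection set
is the arithmetic progression `{q k - 1 : 0 ≤ k ≤ p}`. In any Cayley graph of an abelian group with
connection set `{k c - d : 0 ≤ k ≤ p}`, the legs of an induced `S_{2,2,2}` centred at `x` are
`x + a_i c - d` and `x + (a_i + b_i) c - 2 d` with `a_i, b_i ≤ p`, and the outer vertex of leg `i` is
adjacent to the inner vertex of leg `j` as soon as `a_i + b_i ∈ [a_j, a_j + p]`. This always happens
for some `i ≠ j`: if `a_k ≤ a_l ≤ a_m`, then `a_l + b_l ≥ a_k` lies in `[a_k, a_k + p]` or exceeds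
`p ≥ a_m`, and then lies in `[a_m, a_m + p]`. -/

def spiderLeg : Fin 3 → Fin 2 → Option (Fin 2 ⊕ Fin 2 ⊕ Fin 2)
  | 0, t => some (.inl t)
  | 1, t => some (.inr (.inl t))
  | 2, t => some (.inr (.inr t))

lemma spider_adj_none_spiderLeg (i : Fin 3) : (spider 2 2 2).Adj none (spiderLeg i 0) := by
  fin_cases i <;> simp [spider, spiderLeg]

lemma spider_adj_spiderLeg (i : Fin 3) : (spider 2 2 2).Adj (spiderLeg i 0) (spiderLeg i 1) := by
  fin_cases i <;> simp [spider, spiderLeg]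

lemma spider_not_adj_spiderLeg {i j : Fin 3} (h : i ≠ j) :
    ¬ (spider 2 2 2).Adj (spiderLeg j 0) (spiderLeg i 1) := by
  fin_cases i <;> fin_cases j <;> simp_all [spider, spiderLeg]

lemma spiderLeg_zero_ne_spiderLeg_one (i j : Fin 3) : spiderLeg j 0 ≠ spiderLeg i 1 := by
  fin_cases i <;> fin_cases j <;> simp [spiderLeg]

lemma exists_ne_mem_Icc {p : ℕ} {a b : Fin 3 → ℕ} (ha : ∀ i, a i ≤ p) (hb : ∀ i, b i ≤ p) :
    ∃ i j, i ≠ j ∧ a i + b i ∈ Set.Icc (a j) (a j + p) := by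
  by_contra! h
  simp only [Set.mem_Icc, not_and, not_le] at h
  have := h 0 1 (by decide); have := h 0 2 (by decide); have := h 1 0 (by decide)
  have := h 1 2 (by decide); have := h 2 0 (by decide); have := h 2 1 (by decide)
  have := ha 0; have := ha 1; have := ha 2; have := hb 0; have := hb 1; have := hb 2
  omega

lemma add_nsmul_sub_add_nsmul_sub {A : Type*} [AddCommGroup A] (x c d : A) {a a' b t : ℕ}
    (h : a + b = a' + t) : x + a • c - d + b • c - d = x + a' • c - d + t • c - d := by
  have : a • c + b • c = a' • c + t • c := by rw [← add_nsmul, ← add_nsmul, h]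
  linear_combination (norm := module) this

theorem isFreeOf_spider_of_adj_iff {A : Type*} [AddCommGroup A] {G : SimpleGraph A} {c d : A}
    {p : ℕ} (hG : ∀ i j, i ≠ j → (G.Adj i j ↔ ∃ k ≤ p, j = i + k • c - d)) :
    IsFreeOf G (spider 2 2 2) := by
  rintro S ⟨e⟩
  set f : Option (Fin 2 ⊕ Fin 2 ⊕ Fin 2) → A := fun v => e v
  have hf : ∀ u v, G.Adj (f u) (f v) ↔ (spider 2 2 2).Adj u v := fun u v => e.map_adj_iff
  have hstep : ∀ u v, (spider 2 2 2).Adj u v → ∃ k ≤ p, f v = f u + k • c - d := fun u v huv =>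
    (hG _ _ ((hf u v).2 huv).ne).1 ((hf u v).2 huv)
  choose a ha hy using fun i => hstep _ _ (spider_adj_none_spiderLeg i)
  choose b hb hz using fun i => hstep _ _ (spider_adj_spiderLeg i)
  obtain ⟨i, j, hij, hlo, hhi⟩ := exists_ne_mem_Icc ha hb
  refine spider_not_adj_spiderLeg hij ((hf _ _).1 ((hG _ _ ?_).2 ⟨a i + b i - a j, by omega, ?_⟩))
  · exact fun h => spiderLeg_zero_ne_spiderLeg_one i j (e.injective (Subtype.ext h))
  · rw [hz, hy, hy]
    exact add_nsmul_sub_add_nsmul_sub _ _ _ (by omega)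

lemma ZMod.natCast_self_eq_two {n : ℕ} (h : 2 ≤ n) : (n : ZMod (n - 2)) = 2 := by
  obtain ⟨m, rfl⟩ := Nat.exists_eq_add_of_le' h
  simp

lemma Gqp_adj_iff {q p : ℕ} (h : 2 ≤ q * p) {i j : ZMod (q * p - 2)} (hij : i ≠ j) :
    (Gqp q p).Adj i j ↔ ∃ k ≤ p, j = i + k • (q : ZMod (q * p - 2)) - 1 := by
  have hqp := ZMod.natCast_self_eq_two h
  push_cast at hqp
  simp only [Gqp, fromRel_adj, ne_eq, hij, not_false_eq_true, true_and, nsmul_eq_mul,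
    Nat.cast_mul]
  constructor
  · rintro ((rfl | ⟨k, -, hk, rfl⟩) | (rfl | ⟨k, -, hk, rfl⟩))
    · exact ⟨p, le_rfl, by linear_combination -hqp⟩
    · exact ⟨k, by omega, by ring⟩
    · exact ⟨0, by omega, by ring⟩
    · refine ⟨p - k, by omega, ?_⟩
      rw [Nat.cast_sub (by omega)]
      linear_combination -hqp
  · rintro ⟨k, hk, rfl⟩
    obtain rfl | hk0 := Nat.eq_zero_or_pos k
    · right; left; ring
    obtain rfl | hkp := eq_or_lt_of_le hk
    · left; left; linear_combination hqp
    · left; right; exact ⟨k, hk0, by omega, by ring⟩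

theorem stmt17_general (q p : ℕ) (hq5 : 5 ≤ q) (hp : 1 ≤ p) :
    IsFreeOf (Gqp q p) (spider 2 2 2) :=
  isFreeOf_spider_of_adj_iff fun _ _ hij => Gqp_adj_iff (by nlinarith) hij

/-- For odd `q ≥ 5` and every `p ≥ 1`, the graph `G_{q,p}` contains no induced subgraph
isomorphic to `S_{2,2,2}`. -/
theorem stmt17 (q p : ℕ) (hq : Odd q) (hq5 : 5 ≤ q) (hp : 1 ≤ p) :
    IsFreeOf (Gqp q p) (spider 2 2 2) :=
  stmt17_general q p hq5 hp
end

section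
/- Let q ≥ 3 be odd. If p ≥ 2q+1, then G_{q,p} contains an induced path on 3q−3 vertices. -/
open SimpleGraph

/-!
Write `N = qp - 2` and `m = ⌊(p - 1)/2⌋`. For `0 < D < N` representing `y - x`, the vertices
`x` and `y` of `G_{q,p}` are adjacent iff `D ∈ {1, N - 1}` or `q ∣ D + 1`. The path takes
`r (qm - 1) - t (q + 1)` as its vertex `3t + r` (`r < 3`): a step inside a block adds `qm - 1`,
and a step to the next block adds `-(2qm + q - 1)`, which is `-1` or `q - 1` modulo `N` as `p`
is odd or even. For two non-consecutive vertices `s` blocks apart, `D + 1 ≡ -u (mod q)` with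
`u ∈ {s, s + 1}` and `0 < u < q`, since there are only `q - 1` blocks.
-/

theorem Int.ModEq.eq_of_lt_of_lt {n a b : ℤ} (h : a ≡ b [ZMOD n]) (ha₀ : 0 ≤ a) (ha : a < n)
    (hb₀ : 0 ≤ b) (hb : b < n) : a = b := by
  rwa [Int.ModEq, Int.emod_eq_of_lt ha₀ ha, Int.emod_eq_of_lt hb₀ hb] at h

theorem Int.not_dvd_of_add_eq_mul {q a u w : ℤ} (hu₀ : 0 < u) (hu : u < q) (h : a + u = q * w) :
    ¬ q ∣ a := fun ha ↦
  hu.not_ge (Int.le_of_dvd hu₀ ((Int.dvd_add_right ha).mp ⟨w, h⟩))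

theorem SimpleGraph.pathGraph_isIndContained_of_adj_iff {V : Type*} {G : SimpleGraph V} {n : ℕ}
    (f : Fin n → V)
    (hf : ∀ i j : Fin n, i < j → f i ≠ f j ∧ (G.Adj (f i) (f j) ↔ (j : ℕ) = i + 1)) :
    pathGraph n ⊴ G := by
  have hinj : Function.Injective f := by
    intro i j hij
    by_contra hne
    rcases lt_or_gt_of_ne hne with h | h
    · exact (hf i j h).1 hij
    · exact (hf j i h).1 hij.symm
  refine ⟨⟨⟨f, hinj⟩, fun {i j} ↦ ?_⟩⟩
  simp only [Function.Embedding.coeFn_mk, pathGraph_adj]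
  rcases lt_trichotomy i j with h | rfl | h
  · rw [(hf i j h).2]; omega
  · simp
  · rw [G.adj_comm, (hf j i h).2]; omega

theorem ZMod.intCast_eq_intCast_iff_mul_sub_two {q p : ℕ} (hqp : 2 ≤ q * p) (a b : ℤ) :
    (a : ZMod (q * p - 2)) = b ↔ a ≡ b [ZMOD q * p - 2] := by
  rw [ZMod.intCast_eq_intCast_iff, Nat.cast_sub hqp]; push_cast; rfl

theorem ZMod.ne_of_sub_eq_intCast {n : ℕ} {x y : ZMod n} {D : ℤ} (hxy : y - x = D)
    (hD₀ : 0 < D) (hD : D < n) : x ≠ y := by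
  rintro rfl
  rw [sub_self, eq_comm, ZMod.intCast_zmod_eq_zero_iff_dvd] at hxy
  exact hD₀.ne' (Int.eq_zero_of_dvd_of_nonneg_of_lt hD₀.le hD hxy)

section Adjacency

variable {q p : ℕ} {x y : ZMod (q * p - 2)} {D : ℤ}

theorem eq_or_dvd_of_Gqp_adj (hq : 2 ≤ q) (hxy : y - x = D) (hD₀ : 0 < D)
    (hD : D < q * p - 2) (hadj : (Gqp q p).Adj x y) :
    D = 1 ∨ D = q * p - 3 ∨ (q : ℤ) ∣ D + 1 := by
  have hqp : 2 ≤ q * p := by exact_mod_cast (show (2 : ℤ) ≤ q * p by omega)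
  have hsub : ∀ c : ℤ, y - x = c → D ≡ c [ZMOD q * p - 2] := fun c h ↦ by
    rwa [hxy, ZMod.intCast_eq_intCast_iff_mul_sub_two hqp] at h
  have hk : ∀ k : ℕ, 1 ≤ k → k ≤ p - 1 →
      (q : ℤ) ≤ q * k ∧ (q : ℤ) * k ≤ q * p - q := by
    intro k hk₁ hkp
    have : (k : ℤ) ≤ p - 1 := by omega
    constructor <;> nlinarith
  rw [Gqp, fromRel_adj] at hadj
  rcases hadj.2 with (h | ⟨k, hk₁, hkp, h⟩) | (h | ⟨k, hk₁, hkp, h⟩)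
  · have hm : D ≡ 1 [ZMOD q * p - 2] := hsub 1 (by rw [h]; simp)
    exact Or.inl (hm.eq_of_lt_of_lt hD₀.le hD (by norm_num) (by omega))
  · obtain ⟨hqk, hqk'⟩ := hk k hk₁ hkp
    have hm : D ≡ q * k - 1 [ZMOD q * p - 2] := hsub _ (by rw [h]; push_cast; ring)
    have hDk := hm.eq_of_lt_of_lt hD₀.le hD (by omega) (by omega)
    exact Or.inr (Or.inr ⟨k, by omega⟩)
  · have hm : D ≡ q * p - 3 [ZMOD q * p - 2] :=
      (hsub (-1) (by rw [h]; simp)).trans (Int.modEq_iff_dvd.mpr ⟨1, by ring⟩)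
    exact Or.inr (Or.inl (hm.eq_of_lt_of_lt hD₀.le hD (by omega) (by omega)))
  · obtain ⟨hqk, hqk'⟩ := hk k hk₁ hkp
    have hm : D ≡ q * p - 1 - q * k [ZMOD q * p - 2] :=
      (hsub (1 - q * k) (by rw [h]; push_cast; ring)).trans (Int.modEq_iff_dvd.mpr ⟨1, by ring⟩)
    have hDk := hm.eq_of_lt_of_lt hD₀.le hD (by omega) (by omega)
    exact Or.inr (Or.inr ⟨p - k, by rw [hDk]; ring⟩)

theorem Gqp_adj_of_eq_or_dvd (hxy : y - x = D) (hD₀ : 0 < D) (hD : D < q * p - 2)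
    (h : D = 1 ∨ D = q * p - 3 ∨ (q : ℤ) ∣ D + 1) : (Gqp q p).Adj x y := by
  have hqp : 2 ≤ q * p := by exact_mod_cast (show (2 : ℤ) ≤ q * p by omega)
  rw [Gqp, fromRel_adj]
  refine ⟨ZMod.ne_of_sub_eq_intCast hxy hD₀ (by omega), ?_⟩
  rcases h with h | h | ⟨k, hqk⟩
  · refine Or.inl (Or.inl ?_)
    rw [← sub_eq_iff_eq_add', hxy, h, Int.cast_one]
  · have hm : y - x = ((-1 : ℤ) : ZMod (q * p - 2)) := by
      rw [hxy, ZMod.intCast_eq_intCast_iff_mul_sub_two hqp, h]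
      exact Int.modEq_iff_dvd.mpr ⟨-1, by ring⟩
    refine Or.inr (Or.inl ?_)
    push_cast at hm
    linear_combination -hm
  · have hk₁ : 0 < k := by nlinarith
    have hkp : k < p := by nlinarith
    lift k to ℕ using hk₁.le
    refine Or.inl (Or.inr ⟨k, by omega, by omega, ?_⟩)
    have hqk' : (D : ZMod (q * p - 2)) + 1 = (q * k : ℕ) := by
      rw [← Int.cast_one, ← Int.cast_add, hqk]; push_cast; rfl
    linear_combination hxy + hqk'

theorem Gqp_adj_iff_s18 (hq : 2 ≤ q) (hxy : y - x = D) (hD₀ : 0 < D) (hD : D < q * p - 2) :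
    (Gqp q p).Adj x y ↔ D = 1 ∨ D = q * p - 3 ∨ (q : ℤ) ∣ D + 1 :=
  ⟨eq_or_dvd_of_Gqp_adj hq hxy hD₀ hD, Gqp_adj_of_eq_or_dvd hxy hD₀ hD⟩

end Adjacency

/-- `s` and `ρ` are the differences of the block indices and of the offsets of two path vertices
`3t + r`, and `p = 2m + e`. -/
theorem exists_nonadjacent_rep_of_far {q m e s ρ : ℤ} (hm : q ≤ m) (he : e = 1 ∨ e = 2)
    (hs₀ : 0 ≤ s) (hs : s ≤ q - 2) (hρ₀ : -2 ≤ ρ) (hρ : ρ ≤ 2)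
    (hfar : 2 ≤ 3 * s + ρ) :
    ∃ D, ρ * (q * m - 1) - s * (q + 1) ≡ D [ZMOD q * (2 * m + e) - 2] ∧
      1 < D ∧ D < q * (2 * m + e) - 3 ∧ ¬ q ∣ D + 1 := by
  have hqm : q * q ≤ q * m := by nlinarith
  have hqe : q ≤ q * e ∧ q * e ≤ 2 * q := by
    rcases he with rfl | rfl <;> constructor <;> linarith
  have hsq : s * (q + 1) ≤ (q - 2) * (q + 1) := by nlinarith
  interval_cases ρ
  · have hs₂ : 2 ≤ s := by omega
    refine ⟨2 * q * m + 2 * q * e - 2 - s * (q + 1), Int.modEq_iff_dvd.mpr ⟨2, by ring⟩,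
      by nlinarith, by nlinarith, Int.not_dvd_of_add_eq_mul (u := s + 1) (w := 2 * m + 2 * e - s)
        (by omega) (by omega) (by ring)⟩
  · refine ⟨q * m + q * e - 1 - s * (q + 1), Int.modEq_iff_dvd.mpr ⟨1, by ring⟩,
      by nlinarith, by nlinarith, Int.not_dvd_of_add_eq_mul (u := s) (w := m + e - s)
        (by omega) (by omega) (by ring)⟩
  · refine ⟨q * (2 * m + e) - 2 - s * (q + 1), Int.modEq_iff_dvd.mpr ⟨1, by ring⟩,
      by nlinarith, by nlinarith, Int.not_dvd_of_add_eq_mul (u := s + 1) (w := 2 * m + e - s)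
        (by omega) (by omega) (by ring)⟩
  · refine ⟨q * m - 1 - s * (q + 1), Int.modEq_iff_dvd.mpr ⟨0, by ring⟩,
      by nlinarith, by nlinarith, Int.not_dvd_of_add_eq_mul (u := s) (w := m - s)
        (by omega) (by omega) (by ring)⟩
  · refine ⟨2 * q * m - 2 - s * (q + 1), Int.modEq_iff_dvd.mpr ⟨0, by ring⟩,
      by nlinarith, by nlinarith, Int.not_dvd_of_add_eq_mul (u := s + 1) (w := 2 * m - s)
        (by omega) (by omega) (by ring)⟩

def pathVertex (q m i : ℕ) : ℤ :=
  (i % 3 : ℕ) * ((q : ℤ) * m - 1) - (i / 3 : ℕ) * ((q : ℤ) + 1)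

theorem pathVertex_sub_modEq {q p i j : ℕ} (hq : 3 ≤ q) (hp : 2 * q + 1 ≤ p) (hij : i < j)
    (hj : j < 3 * q - 3) :
    ∃ D : ℤ,
      pathVertex q ((p - 1) / 2) j - pathVertex q ((p - 1) / 2) i ≡ D [ZMOD q * p - 2] ∧
      0 < D ∧ D < q * p - 2 ∧
      (j = i + 1 ↔ D = 1 ∨ D = q * p - 3 ∨ (q : ℤ) ∣ D + 1) := by
  set m := (p - 1) / 2
  obtain ⟨e, he, hpe⟩ : ∃ e : ℤ, (e = 1 ∨ e = 2) ∧ (p : ℤ) = 2 * m + e :=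
    ⟨p - 2 * m, by omega, by ring⟩
  have he₁ : 1 ≤ e := by omega
  have hqm : (q : ℤ) * q ≤ q * m := by
    have : (q : ℤ) ≤ m := by omega
    nlinarith
  have hsub : pathVertex q m j - pathVertex q m i =
      ((j % 3 : ℕ) - (i % 3 : ℕ) : ℤ) * (q * m - 1) -
        ((j / 3 : ℕ) - (i / 3 : ℕ) : ℤ) * (q + 1) := by
    unfold pathVertex; ring
  rw [hsub, hpe]
  by_cases hnext : j = i + 1
  · simp only [hnext, true_iff]
    rcases Nat.lt_or_ge (i % 3) 2 with hi | hi
    · have h₁ : (((i + 1) % 3 : ℕ) - (i % 3 : ℕ) : ℤ) = 1 := by omega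
      have h₂ : (((i + 1) / 3 : ℕ) - (i / 3 : ℕ) : ℤ) = 0 := by omega
      exact ⟨q * m - 1, Int.modEq_iff_dvd.mpr ⟨0, by rw [h₁, h₂]; ring⟩, by nlinarith,
        by nlinarith, Or.inr (Or.inr ⟨m, by ring⟩)⟩
    · have h₁ : (((i + 1) % 3 : ℕ) - (i % 3 : ℕ) : ℤ) = -2 := by omega
      have h₂ : (((i + 1) / 3 : ℕ) - (i / 3 : ℕ) : ℤ) = 1 := by omega
      rw [h₁, h₂]
      rcases he with rfl | rfl
      · exact ⟨q * (2 * m + 1) - 3, Int.modEq_iff_dvd.mpr ⟨2, by ring⟩, by nlinarith,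
          by nlinarith, Or.inr (Or.inl rfl)⟩
      · exact ⟨q - 1, Int.modEq_iff_dvd.mpr ⟨1, by ring⟩, by nlinarith, by nlinarith,
          Or.inr (Or.inr ⟨1, by ring⟩)⟩
  · obtain ⟨D, hD, hD₁, hD₂, hdvd⟩ := exists_nonadjacent_rep_of_far (q := q) (m := m)
      (s := (j / 3 : ℕ) - (i / 3 : ℕ)) (ρ := (j % 3 : ℕ) - (i % 3 : ℕ))
      (by omega) he (by omega) (by omega) (by omega) (by omega) (by omega)
    refine ⟨D, hD, by omega, by omega, iff_of_false hnext ?_⟩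
    rintro (h | h | h)
    exacts [by omega, by omega, hdvd h]

theorem stmt18_general (q p : ℕ) (hq3 : 3 ≤ q) (hp : 2 * q + 1 ≤ p) :
    ∃ s : Set (ZMod (q * p - 2)),
      Nonempty (pathGraph (3 * q - 3) ≃g (Gqp q p).induce s) := by
  rw [← isIndContained_iff_exists_iso_induce]
  have hqp : 2 ≤ q * p := by nlinarith
  let v : ℕ → ZMod (q * p - 2) := fun i ↦ pathVertex q ((p - 1) / 2) i
  refine pathGraph_isIndContained_of_adj_iff (fun i ↦ v i) fun i j hij ↦ ?_
  obtain ⟨D, hD, hD₀, hDN, hnext⟩ := pathVertex_sub_modEq hq3 hp hij j.isLt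
  have hxy : v j - v i = D := by
    rw [← Int.cast_sub, ZMod.intCast_eq_intCast_iff_mul_sub_two hqp]
    exact hD
  exact ⟨ZMod.ne_of_sub_eq_intCast hxy hD₀ (by omega),
    (Gqp_adj_iff_s18 (by omega) hxy hD₀ hDN).trans hnext.symm⟩

/-- For odd `q ≥ 3` and `p ≥ 2q + 1`, the graph `G_{q,p}` contains an induced path on
`3q - 3` vertices. -/
theorem stmt18 (q p : ℕ) (hq : Odd q) (hq3 : 3 ≤ q) (hp : 2 * q + 1 ≤ p) :
    ∃ s : Set (ZMod (q * p - 2)),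
      Nonempty (pathGraph (3 * q - 3) ≃g (Gqp q p).induce s) :=
  stmt18_general q p hq3 hp
end
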